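/- For every positive integer n, one has log(n + 1/2) < 1 + 1/3 + 1/4 + ⋯ + 1/n, i.e. log(n + 1/2) < (∑_{k=1}^n 1/k) − 1/2; equivalently, the sequence Γ_n = (∑_{k=1}^n 1/k) − log(n + 1/2) satisfies Γ_n > 1/2 for every positive integer n. -/

import Mathlib

/-!
The sequence `Γ n = H n - log (n + 1/2)` is strictly decreasing: its decrements are
`log (1 + a⁻¹) - 2 / (2a + 1)` with `a = n + 1/2`, positive by the series
`log (1 + a⁻¹) = ∑ₖ 2 / ((2k + 1) (2a + 1) ^ (2k + 1))`. It converges to Euler's constant `γ`,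
because `log (n + 1/2) - log n → 0`. Hence `Γ n > γ > 1/2`.
-/

open Filter Topology Real

lemma two_div_two_mul_add_one_lt_log_one_add_inv {a : ℝ} (ha : 0 < a) :
    2 / (2 * a + 1) < log (1 + a⁻¹) := by
  have hsum := sum_le_hasSum (Finset.range 2) (fun k _ ↦ by positivity) (hasSum_log_one_add_inv ha)
  norm_num [Finset.sum_range_succ] at hsum
  have hterm : 0 < 2 / 3 * ((2 * a + 1) ^ 3)⁻¹ := by positivity
  rw [div_eq_mul_inv]
  linarith

noncomputable def harmonicSubLogAddHalf (n : ℕ) : ℝ := harmonic n - log (n + 1 / 2)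

lemma harmonicSubLogAddHalf_succ_lt (n : ℕ) :
    harmonicSubLogAddHalf (n + 1) < harmonicSubLogAddHalf n := by
  have ha : (0 : ℝ) < n + 1 / 2 := by positivity
  have hlog : log (1 + ((n : ℝ) + 1 / 2)⁻¹) = log ((n + 1 : ℕ) + 1 / 2) - log (n + 1 / 2) := by
    rw [← log_div (by positivity) ha.ne']
    congr 1
    field_simp
    push_cast
    ring
  have hinv : 2 / (2 * ((n : ℝ) + 1 / 2) + 1) = ((n + 1 : ℕ) : ℝ)⁻¹ := by
    push_cast
    field_simp
    ring
  have hstep := two_div_two_mul_add_one_lt_log_one_add_inv ha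
  rw [hlog, hinv] at hstep
  simp only [harmonicSubLogAddHalf, harmonic_succ, Rat.cast_add, Rat.cast_inv, Rat.cast_natCast]
  linarith

lemma strictAnti_harmonicSubLogAddHalf : StrictAnti harmonicSubLogAddHalf :=
  strictAnti_nat_of_succ_lt harmonicSubLogAddHalf_succ_lt

lemma tendsto_harmonicSubLogAddHalf :
    Tendsto harmonicSubLogAddHalf atTop (𝓝 eulerMascheroniConstant) := by
  have hshift := (tendsto_log_comp_add_sub_log (1 / 2)).comp tendsto_natCast_atTop_atTop
  rw [← sub_zero eulerMascheroniConstant]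
  refine (tendsto_harmonic_sub_log.sub hshift).congr fun n ↦ ?_
  simp [harmonicSubLogAddHalf]

lemma eulerMascheroniConstant_lt_harmonicSubLogAddHalf (n : ℕ) :
    eulerMascheroniConstant < harmonicSubLogAddHalf n :=
  (strictAnti_harmonicSubLogAddHalf.antitone.le_of_tendsto tendsto_harmonicSubLogAddHalf
    (n + 1)).trans_lt (strictAnti_harmonicSubLogAddHalf n.lt_succ_self)

theorem log_half_shift_lt_harmonic_general (n : ℕ) :
    Real.log (n + 1 / 2) < (∑ k ∈ Finset.Icc 1 n, (1 : ℝ) / k) - 1 / 2 := by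
  have hsum : (∑ k ∈ Finset.Icc 1 n, (1 : ℝ) / k) = harmonic n := by
    simp [harmonic_eq_sum_Icc]
  have hγ := eulerMascheroniConstant_lt_harmonicSubLogAddHalf n
  rw [harmonicSubLogAddHalf] at hγ
  linarith [one_half_lt_eulerMascheroniConstant]

theorem log_half_shift_lt_harmonic (n : ℕ) (hn : 1 ≤ n) :
    Real.log (n + 1 / 2) < (∑ k ∈ Finset.Icc 1 n, (1 : ℝ) / k) - 1 / 2 :=
  log_half_shift_lt_harmonic_general n
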